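/- arXiv:2308.12173 — 3 statements merged into one kernel-verified Lean document; each statement's English description precedes it below -/
import Mathlib

section
/- Fix integers n ≥ 0 and d ≥ 1. Let S be a finite set of pairs (i,j) of nonnegative integers with i + j ≤ d for every (i,j) ∈ S, and let a⁺_{ij}, a⁻_{ij} be real numbers for each (i,j) ∈ S. Set a_{ij} := max(a⁺_{ij}, -a⁻_{ij}). Then for all real x > 0 and all real y with y ≥ -(n+1)x, one has max( Σ_{(i,j)∈S} a⁺_{ij} x^i y^j , -Σ_{(i,j)∈S} a⁻_{ij} x^i y^j ) ≤ Σ_{(i,j)∈S} a_{ij} x^i y^j + Σ_{(i,j)∈S} |a⁺_{ij} + a⁻_{ij}| (n+1)^j x^{i+j}. -/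
lemma term_bound (n i j : ℕ) (b c e x y : ℝ) (hbc : b ≤ c) (hbe : c - b ≤ e)
    (hx : 0 < x) (hy : -((n : ℝ) + 1) * x ≤ y) :
    b * x ^ i * y ^ j ≤ c * x ^ i * y ^ j + e * ((n : ℝ) + 1) ^ j * x ^ (i + j) := by
  have he : 0 ≤ e := le_trans (by linarith) hbe
  rcases le_or_gt 0 y with hy0 | hy0
  · have h1 : b * x ^ i * y ^ j ≤ c * x ^ i * y ^ j :=
      mul_le_mul_of_nonneg_right (mul_le_mul_of_nonneg_right hbc (pow_nonneg hx.le i))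
        (pow_nonneg hy0 j)
    have h2 : 0 ≤ e * ((n : ℝ) + 1) ^ j * x ^ (i + j) := by positivity
    linarith
  · have habs : |y| ≤ ((n : ℝ) + 1) * x := by
      rw [abs_of_neg hy0]; linarith
    have key : (c - b) * x ^ i * |y| ^ j ≤ e * ((n : ℝ) + 1) ^ j * x ^ (i + j) := by
      calc (c - b) * x ^ i * |y| ^ j
          ≤ e * x ^ i * (((n : ℝ) + 1) * x) ^ j := by
            apply mul_le_mul (mul_le_mul_of_nonneg_right hbe (pow_nonneg hx.le i))
              (pow_le_pow_left₀ (abs_nonneg y) habs j) (pow_nonneg (abs_nonneg y) j)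
              (by positivity)
        _ = e * ((n : ℝ) + 1) ^ j * x ^ (i + j) := by rw [mul_pow, pow_add]; ring
    have h3 : b * x ^ i * y ^ j - c * x ^ i * y ^ j ≤ (c - b) * x ^ i * |y| ^ j := by
      have h4 : b * x ^ i * y ^ j - c * x ^ i * y ^ j = (b - c) * x ^ i * y ^ j := by ring
      rw [h4]
      calc (b - c) * x ^ i * y ^ j ≤ |(b - c) * x ^ i * y ^ j| := le_abs_self _
        _ = (c - b) * x ^ i * |y| ^ j := by
            rw [abs_mul, abs_mul, abs_pow, abs_pow, abs_of_pos hx, abs_sub_comm,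
              abs_of_nonneg (by linarith : (0:ℝ) ≤ c - b)]
    linarith

/-- Key claim: from two families of coefficients `a⁺`, `a⁻` indexed by pairs `(i,j)` with
`i + j ≤ d`, setting `a_{ij} = max (a⁺_{ij}) (-a⁻_{ij})`, the maximum of the two polynomial
evaluations is bounded by `Σ a_{ij} x^i y^j + Σ |a⁺_{ij} + a⁻_{ij}| (n+1)^j x^(i+j)`
on the region `x > 0`, `y ≥ -(n+1)x`. -/
theorem key_claim (n d : ℕ) (hd : 1 ≤ d) (S : Finset (ℕ × ℕ))
    (hS : ∀ p ∈ S, p.1 + p.2 ≤ d) (aP aM : ℕ × ℕ → ℝ) :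
    ∀ x y : ℝ, 0 < x → -((n : ℝ) + 1) * x ≤ y →
      max (∑ p ∈ S, aP p * x ^ p.1 * y ^ p.2)
          (-∑ p ∈ S, aM p * x ^ p.1 * y ^ p.2) ≤
        (∑ p ∈ S, max (aP p) (-aM p) * x ^ p.1 * y ^ p.2) +
          ∑ p ∈ S, |aP p + aM p| * ((n : ℝ) + 1) ^ p.2 * x ^ (p.1 + p.2) := by
  intro x y hx hy
  rw [← Finset.sum_add_distrib]
  apply max_le
  · apply Finset.sum_le_sum
    intro p _
    apply term_bound n p.1 p.2 _ _ _ x y (le_max_left _ _) _ hx hy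
    rcases max_cases (aP p) (-aM p) with ⟨h, _⟩ | ⟨h, _⟩ <;> rw [h] <;>
      [skip; skip] <;>
      linarith [neg_abs_le (aP p + aM p), le_abs_self (aP p + aM p)]
  · rw [← Finset.sum_neg_distrib]
    apply Finset.sum_le_sum
    intro p _
    have h0 : -(aM p * x ^ p.1 * y ^ p.2) = (-aM p) * x ^ p.1 * y ^ p.2 := by ring
    rw [h0]
    apply term_bound n p.1 p.2 _ _ _ x y (le_max_right _ _) _ hx hy
    rcases max_cases (aP p) (-aM p) with ⟨h, _⟩ | ⟨h, _⟩ <;> rw [h] <;>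
      linarith [neg_abs_le (aP p + aM p), le_abs_self (aP p + aM p)]
end

section
/- Fix an integer n ≥ 1. There exist bivariate real polynomials R_i^-(x,y) and R_i^+(x,y) for each 2 ≤ i ≤ n, with total degree at most i and coefficients depending only on n, such that the following holds: for any real numbers t_0, t_1, ..., t_n with t_0 > 0 satisfying, for every 1 ≤ i ≤ n, 0 ≤ Σ_{j=0}^{i} binom(i,j) (n+1)^{i-j} t_j ≤ ( (n+1) t_0 + t_1 )^i / t_0^{i-1}, one has for every 2 ≤ i ≤ n: R_i^-(t_0, t_1) ≤ t_i · t_0^{i-1} ≤ R_i^+(t_0, t_1). -/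
/-!
Put `s j = ∑ k ≤ j, (j.choose k) (n+1)^(j-k) t k` and `a = (n+1) t 0 + t 1`, so the hypotheses
read `0 ≤ s j * t 0 ^ (j-1) ≤ a ^ j`, and `s 0 = t 0`. Binomial inversion gives
`t i = ∑ j ≤ i, (i.choose j) (-(n+1))^(i-j) s j`; bounding each term in absolute value and
summing by the binomial theorem yields
`|t i * t 0 ^ (i-1)| ≤ (a + (n+1) t 0)^i = (2(n+1) t 0 + t 1)^i`,
so `R_i^± = ±(2(n+1) X + Y)^i` work.
-/

open Finset MvPolynomial

-- On exponential generating functions this is multiplication by `exp (x z)`.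
def binomialShift {R : Type*} [CommSemiring R] (x : R) (t : ℕ → R) (i : ℕ) : R :=
  ∑ j ∈ range (i + 1), (i.choose j : R) * x ^ (i - j) * t j

section CommSemiring

variable {R : Type*} [CommSemiring R]

theorem binomialShift_binomialShift (x y : R) (t : ℕ → R) (i : ℕ) :
    binomialShift x (binomialShift y t) i = binomialShift (x + y) t i := by
  simp only [binomialShift, mul_sum, range_eq_Ico]
  rw [← sum_Ico_Ico_comm]
  refine sum_congr rfl fun k hk => ?_
  have hki : k ≤ i := Nat.lt_succ_iff.mp (mem_Ico.mp hk).2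
  calc ∑ j ∈ Ico k (i + 1),
        (i.choose j : R) * x ^ (i - j) * ((j.choose k : R) * y ^ (j - k) * t k)
      = ∑ m ∈ range (i - k + 1), (i.choose k : R) * t k *
          (y ^ m * x ^ (i - k - m) * ((i - k).choose m : R)) := by
        rw [sum_Ico_eq_sum_range, Nat.sub_add_comm hki]
        refine sum_congr rfl fun m hm => ?_
        have hm : m ≤ i - k := Nat.lt_succ_iff.mp (mem_range.mp hm)
        have hchoose : (i.choose (k + m) : R) * ((k + m).choose k : R) =
            (i.choose k : R) * ((i - k).choose m : R) := by
          rw [← Nat.cast_mul, ← Nat.cast_mul, Nat.choose_mul (Nat.le_add_right k m),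
            Nat.add_sub_cancel_left]
        rw [Nat.add_sub_cancel_left, show i - (k + m) = i - k - m by omega]
        calc (i.choose (k + m) : R) * x ^ (i - k - m) * (((k + m).choose k : R) * y ^ m * t k)
            = (i.choose (k + m) : R) * ((k + m).choose k : R) *
                (x ^ (i - k - m) * y ^ m * t k) := by ring
          _ = _ := by rw [hchoose]; ring
    _ = (i.choose k : R) * (x + y) ^ (i - k) * t k := by
        rw [← mul_sum, ← add_pow, add_comm y]; ring

theorem binomialShift_zero (t : ℕ → R) (i : ℕ) : binomialShift 0 t i = t i := by
  rw [binomialShift, sum_eq_single_of_mem i (self_mem_range_succ i)]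
  · simp
  · intro j hj hji
    rw [zero_pow (by have := mem_range.mp hj; omega), mul_zero, zero_mul]

end CommSemiring

theorem binomialShift_neg_binomialShift {R : Type*} [CommRing R] (x : R) (t : ℕ → R) (i : ℕ) :
    binomialShift (-x) (binomialShift x t) i = t i := by
  rw [binomialShift_binomialShift, neg_add_cancel, binomialShift_zero]

theorem totalDegree_C_mul_X_add_X_pow_le {R σ : Type*} [CommSemiring R] (c : R) (a b : σ)
    (i : ℕ) :
    ((C c * X a + X b : MvPolynomial σ R) ^ i).totalDegree ≤ i := by
  simpa using ((((isHomogeneous_X R a).C_mul c).add (isHomogeneous_X R b)).pow i).totalDegree_le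

section LinearOrderedField

variable {K : Type*} [Field K] [LinearOrder K] [IsStrictOrderedRing K]

theorem abs_mul_pow_le_of_binomialShift_le {x a : K} {t : ℕ → K} {i : ℕ} (hx : 0 ≤ x)
    (ht0 : 0 < t 0) (hi : 1 ≤ i)
    (hs : ∀ j, 1 ≤ j → j ≤ i →
      0 ≤ binomialShift x t j ∧ binomialShift x t j ≤ a ^ j / t 0 ^ (j - 1)) :
    |t i * t 0 ^ (i - 1)| ≤ (a + x * t 0) ^ i := by
  have hscaled : ∀ j ≤ i, 0 ≤ binomialShift x t j * t 0 ^ (i - 1) ∧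
      binomialShift x t j * t 0 ^ (i - 1) ≤ a ^ j * t 0 ^ (i - j) := by
    intro j hji
    rcases Nat.eq_zero_or_pos j with rfl | hj
    · have hpow : t 0 * t 0 ^ (i - 1) = t 0 ^ i := by rw [← pow_succ', Nat.sub_add_cancel hi]
      simp only [binomialShift, zero_add, range_one, sum_singleton, Nat.choose_self, Nat.cast_one,
        pow_zero, one_mul, Nat.sub_zero, hpow]
      exact ⟨by positivity, le_rfl⟩
    obtain ⟨hs0, hsle⟩ := hs j hj hji
    refine ⟨mul_nonneg hs0 (by positivity), ?_⟩
    calc binomialShift x t j * t 0 ^ (i - 1)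
        = binomialShift x t j * t 0 ^ (j - 1) * t 0 ^ (i - j) := by
          rw [mul_assoc, ← pow_add]; congr 2; omega
      _ ≤ a ^ j * t 0 ^ (i - j) := by
          gcongr
          rwa [← le_div_iff₀ (by positivity)]
  calc |t i * t 0 ^ (i - 1)|
      = |∑ j ∈ range (i + 1),
          (i.choose j : K) * (-x) ^ (i - j) * (binomialShift x t j * t 0 ^ (i - 1))| := by
        rw [← binomialShift_neg_binomialShift x t i, binomialShift, sum_mul]
        simp only [mul_assoc]
    _ ≤ ∑ j ∈ range (i + 1),
          |(i.choose j : K) * (-x) ^ (i - j) * (binomialShift x t j * t 0 ^ (i - 1))| :=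
        abs_sum_le_sum_abs _ _
    _ ≤ ∑ j ∈ range (i + 1), a ^ j * (x * t 0) ^ (i - j) * (i.choose j : K) := by
        refine sum_le_sum fun j hj => ?_
        obtain ⟨hnonneg, hle⟩ := hscaled j (Nat.lt_succ_iff.mp (mem_range.mp hj))
        rw [abs_mul, abs_mul, abs_pow, abs_neg, Nat.abs_cast, abs_of_nonneg hx,
          abs_of_nonneg hnonneg, mul_pow]
        calc (i.choose j : K) * x ^ (i - j) * (binomialShift x t j * t 0 ^ (i - 1))
            ≤ (i.choose j : K) * x ^ (i - j) * (a ^ j * t 0 ^ (i - j)) := by gcongr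
          _ = a ^ j * (x ^ (i - j) * t 0 ^ (i - j)) * (i.choose j : K) := by ring
    _ = (a + x * t 0) ^ i := (add_pow a (x * t 0) i).symm

end LinearOrderedField

theorem exists_power_bound_polynomials_general (n : ℕ) :
    ∃ Rm Rp : ℕ → MvPolynomial (Fin 2) ℝ,
      (∀ i, 2 ≤ i → i ≤ n → (Rm i).totalDegree ≤ i ∧ (Rp i).totalDegree ≤ i) ∧
      ∀ t : ℕ → ℝ, 0 < t 0 →
        (∀ i, 1 ≤ i → i ≤ n →
          0 ≤ ∑ j ∈ Finset.range (i + 1),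
                (i.choose j : ℝ) * ((n : ℝ) + 1) ^ (i - j) * t j ∧
          (∑ j ∈ Finset.range (i + 1),
                (i.choose j : ℝ) * ((n : ℝ) + 1) ^ (i - j) * t j) ≤
            (((n : ℝ) + 1) * t 0 + t 1) ^ i / (t 0) ^ (i - 1)) →
        ∀ i, 2 ≤ i → i ≤ n →
          MvPolynomial.eval ![t 0, t 1] (Rm i) ≤ t i * (t 0) ^ (i - 1) ∧
          t i * (t 0) ^ (i - 1) ≤ MvPolynomial.eval ![t 0, t 1] (Rp i) := by
  set P : ℕ → MvPolynomial (Fin 2) ℝ := fun i => (C (2 * ((n : ℝ) + 1)) * X 0 + X 1) ^ i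
  refine ⟨fun i => -P i, P, fun i _ _ => ?_, fun t ht0 hyp i hi2 hin => ?_⟩
  · rw [totalDegree_neg]
    exact ⟨totalDegree_C_mul_X_add_X_pow_le _ _ _ i, totalDegree_C_mul_X_add_X_pow_le _ _ _ i⟩
  have hbound := abs_mul_pow_le_of_binomialShift_le (by positivity) ht0 (by omega)
    fun j hj hji => hyp j hj (hji.trans hin)
  have heval :
      eval ![t 0, t 1] (P i) = (((n : ℝ) + 1) * t 0 + t 1 + ((n : ℝ) + 1) * t 0) ^ i := by
    simp only [P, map_pow, map_add, map_mul, eval_C, eval_X, Matrix.cons_val_zero,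
      Matrix.cons_val_one, Matrix.cons_val_fin_one]
    ring
  rw [map_neg, heval, ← abs_le]
  exact hbound

/-- Arithmetic content of Theorem B(2): there exist bivariate polynomials `R i ^-`, `R i ^+`
(for `2 ≤ i ≤ n`) of total degree at most `i`, depending only on `n`, such that for any
real numbers `t 0 > 0, t 1, ..., t n` satisfying, for every `1 ≤ i ≤ n`,
`0 ≤ Σ_{j=0}^{i} (i.choose j) (n+1)^(i-j) t j ≤ ((n+1) t 0 + t 1)^i / (t 0)^(i-1)`,
one has `R_i^-(t 0, t 1) ≤ t i * (t 0)^(i-1) ≤ R_i^+(t 0, t 1)` for every `2 ≤ i ≤ n`. -/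
theorem exists_power_bound_polynomials (n : ℕ) (hn : 1 ≤ n) :
    ∃ Rm Rp : ℕ → MvPolynomial (Fin 2) ℝ,
      (∀ i, 2 ≤ i → i ≤ n → (Rm i).totalDegree ≤ i ∧ (Rp i).totalDegree ≤ i) ∧
      ∀ t : ℕ → ℝ, 0 < t 0 →
        (∀ i, 1 ≤ i → i ≤ n →
          0 ≤ ∑ j ∈ Finset.range (i + 1),
                (i.choose j : ℝ) * ((n : ℝ) + 1) ^ (i - j) * t j ∧
          (∑ j ∈ Finset.range (i + 1),
                (i.choose j : ℝ) * ((n : ℝ) + 1) ^ (i - j) * t j) ≤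
            (((n : ℝ) + 1) * t 0 + t 1) ^ i / (t 0) ^ (i - 1)) →
        ∀ i, 2 ≤ i → i ≤ n →
          MvPolynomial.eval ![t 0, t 1] (Rm i) ≤ t i * (t 0) ^ (i - 1) ∧
          t i * (t 0) ^ (i - 1) ≤ MvPolynomial.eval ![t 0, t 1] (Rp i) :=
  exists_power_bound_polynomials_general n
end

section
/- Fix integers n ≥ 1 and 1 ≤ d ≤ n. Let C_0^-, ..., C_d^- and C_0^+, ..., C_d^+ be real numbers, and for each 2 ≤ i ≤ d let R_i^-(x,y) and R_i^+(x,y) be bivariate real polynomials of total degree at most i. Then there exists a bivariate real polynomial Q(x,y) of total degree at most d, whose coefficients depend only on n, d, the numbers C_i^± and the coefficients of the R_i^±, such that: whenever real numbers c and t_0, t_1, ..., t_d satisfy (i) t_0 > 0, (ii) t_1 ≥ -(n+1) t_0, (iii) Σ_{i=0}^{d} C_i^- t_i ≤ c ≤ Σ_{i=0}^{d} C_i^+ t_i, and (iv) R_i^-(t_0, t_1) ≤ t_i · t_0^{i-1} ≤ R_i^+(t_0, t_1) for all 2 ≤ i ≤ d, one has |c| ≤ Q(t_0, t_1) / t_0^{d-1}.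 -/
open MvPolynomial Finset

noncomputable def maj (a : ℝ) (P : MvPolynomial (Fin 2) ℝ) : MvPolynomial (Fin 2) ℝ :=
  ∑ m ∈ P.support, MvPolynomial.C |P.coeff m| *
    ((MvPolynomial.X 0) ^ (m 0) * (MvPolynomial.X 1 + MvPolynomial.C a * MvPolynomial.X 0) ^ (m 1))

lemma maj_totalDegree (a : ℝ) (P : MvPolynomial (Fin 2) ℝ) :
    (maj a P).totalDegree ≤ P.totalDegree := by
  refine (totalDegree_finset_sum _ _).trans ?_
  apply Finset.sup_le
  intro m hm
  have h1 : (MvPolynomial.X (R := ℝ) (1 : Fin 2) + MvPolynomial.C a * MvPolynomial.X 0).totalDegree ≤ 1 := by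
    refine (totalDegree_add _ _).trans ?_
    simp only [totalDegree_X]
    refine max_le le_rfl ((totalDegree_mul _ _).trans ?_)
    simp [totalDegree_X]
  calc (MvPolynomial.C |P.coeff m| *
      ((MvPolynomial.X (R := ℝ) (0 : Fin 2)) ^ (m 0) * (MvPolynomial.X 1 + MvPolynomial.C a * MvPolynomial.X 0) ^ (m 1))).totalDegree
      ≤ (MvPolynomial.C (R := ℝ) |P.coeff m|).totalDegree +
        ((MvPolynomial.X (R := ℝ) (0 : Fin 2)) ^ (m 0) * (MvPolynomial.X 1 + MvPolynomial.C a * MvPolynomial.X 0) ^ (m 1)).totalDegree :=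
        totalDegree_mul _ _
    _ ≤ 0 + (m 0 * 1 + m 1 * 1) := by
        refine add_le_add (by simp) ((totalDegree_mul _ _).trans (add_le_add ?_ ?_))
        · exact (totalDegree_pow _ _).trans (by simp [totalDegree_X])
        · exact (totalDegree_pow _ _).trans (Nat.mul_le_mul_left _ h1)
    _ = m 0 + m 1 := by ring
    _ = m.sum fun _ e => e := by
        rw [Finsupp.sum_fintype _ _ (fun _ => rfl), Fin.sum_univ_two]
    _ ≤ P.totalDegree := MvPolynomial.le_totalDegree hm

lemma maj_eval (a : ℝ) (P : MvPolynomial (Fin 2) ℝ) (t0 t1 : ℝ)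
    (h0 : 0 ≤ t0) (h1 : |t1| ≤ t1 + a * t0) :
    |MvPolynomial.eval ![t0, t1] P| ≤ MvPolynomial.eval ![t0, t1] (maj a P) := by
  have habs1 : (0:ℝ) ≤ t1 + a * t0 := le_trans (abs_nonneg _) h1
  rw [MvPolynomial.eval_eq]
  unfold maj
  rw [map_sum]
  refine (Finset.abs_sum_le_sum_abs _ _).trans (Finset.sum_le_sum ?_)
  intro m hm
  have hprod : ∏ i ∈ m.support, (![t0, t1]) i ^ m i = t0 ^ m 0 * t1 ^ m 1 := by
    rw [show (∏ i ∈ m.support, (![t0, t1]) i ^ m i) = m.prod (fun i e => (![t0, t1]) i ^ e) from rfl,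
      Finsupp.prod_fintype _ _ (fun _ => pow_zero _), Fin.prod_univ_two]
    simp
  rw [hprod]
  have heval : MvPolynomial.eval ![t0, t1] (MvPolynomial.C |P.coeff m| *
      ((MvPolynomial.X 0) ^ (m 0) * (MvPolynomial.X 1 + MvPolynomial.C a * MvPolynomial.X 0) ^ (m 1)))
      = |P.coeff m| * (t0 ^ m 0 * (t1 + a * t0) ^ m 1) := by
    simp
  rw [heval, abs_mul, abs_mul, abs_pow, abs_pow, abs_of_nonneg h0]
  refine mul_le_mul_of_nonneg_left (mul_le_mul_of_nonneg_left ?_ (pow_nonneg h0 _)) (abs_nonneg _)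
  exact pow_le_pow_left₀ (abs_nonneg _) h1 _


/-- Arithmetic content of Theorem A: from linear two-sided bounds with coefficients `C i ^±`
and polynomial two-sided bounds `R i ^±` of degree ≤ i on the quantities `t i * (t 0)^(i-1)`,
one builds a single bivariate polynomial `Q` of total degree at most `d` with
`|c| ≤ Q(t 0, t 1) / (t 0)^(d-1)`. -/
theorem exists_absolute_bound_polynomial (n d : ℕ) (hn : 1 ≤ n) (hd1 : 1 ≤ d) (hdn : d ≤ n)
    (Cm Cp : ℕ → ℝ) (Rm Rp : ℕ → MvPolynomial (Fin 2) ℝ)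
    (hR : ∀ i, 2 ≤ i → i ≤ d → (Rm i).totalDegree ≤ i ∧ (Rp i).totalDegree ≤ i) :
    ∃ Q : MvPolynomial (Fin 2) ℝ, Q.totalDegree ≤ d ∧
      ∀ (c : ℝ) (t : ℕ → ℝ), 0 < t 0 → -((n : ℝ) + 1) * t 0 ≤ t 1 →
        (∑ i ∈ Finset.range (d + 1), Cm i * t i) ≤ c →
        c ≤ (∑ i ∈ Finset.range (d + 1), Cp i * t i) →
        (∀ i, 2 ≤ i → i ≤ d →
          MvPolynomial.eval ![t 0, t 1] (Rm i) ≤ t i * (t 0) ^ (i - 1) ∧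
          t i * (t 0) ^ (i - 1) ≤ MvPolynomial.eval ![t 0, t 1] (Rp i)) →
        |c| ≤ MvPolynomial.eval ![t 0, t 1] Q / (t 0) ^ (d - 1) := by
  set a : ℝ := 2 * ((n : ℝ) + 1) with ha
  set A : ℕ → ℝ := fun i => |Cm i| + |Cp i| with hA
  set v : MvPolynomial (Fin 2) ℝ := MvPolynomial.X 1 + MvPolynomial.C a * MvPolynomial.X 0 with hv
  refine ⟨MvPolynomial.C (A 0) * (MvPolynomial.X 0) ^ d
      + MvPolynomial.C (A 1) * v * (MvPolynomial.X 0) ^ (d - 1)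
      + ∑ i ∈ Finset.Icc 2 d, MvPolynomial.C (A i) * (maj a (Rm i) + maj a (Rp i))
          * (MvPolynomial.X 0) ^ (d - i), ?_, ?_⟩
  · -- degree bound
    have hvdeg : v.totalDegree ≤ 1 := by
      refine (totalDegree_add _ _).trans (max_le (by simp [totalDegree_X]) ?_)
      exact (totalDegree_mul _ _).trans (by simp [totalDegree_X])
    refine (totalDegree_add _ _).trans (max_le ((totalDegree_add _ _).trans (max_le ?_ ?_)) ?_)
    · refine (totalDegree_mul _ _).trans ?_
      simpa using (totalDegree_pow _ _).trans (by simp [totalDegree_X])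
    · refine (totalDegree_mul _ _).trans ?_
      have h2 : ((MvPolynomial.X (R := ℝ) (0 : Fin 2)) ^ (d - 1)).totalDegree ≤ d - 1 :=
        (totalDegree_pow _ _).trans (by simp [totalDegree_X])
      have h3 : (MvPolynomial.C (R := ℝ) (A 1) * v).totalDegree ≤ 1 :=
        (totalDegree_mul _ _).trans (by simpa using hvdeg)
      omega
    · refine (totalDegree_finset_sum _ _).trans (Finset.sup_le fun i hi => ?_)
      simp only [Finset.mem_Icc] at hi
      refine (totalDegree_mul _ _).trans ?_
      have h2 : ((MvPolynomial.X (R := ℝ) (0 : Fin 2)) ^ (d - i)).totalDegree ≤ d - i :=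
        (totalDegree_pow _ _).trans (by simp [totalDegree_X])
      have h3 : (MvPolynomial.C (R := ℝ) (A i) * (maj a (Rm i) + maj a (Rp i))).totalDegree ≤ i := by
        refine (totalDegree_mul _ _).trans ?_
        have := (totalDegree_add (maj a (Rm i)) (maj a (Rp i))).trans
          (max_le ((maj_totalDegree a _).trans (hR i hi.1 hi.2).1)
            ((maj_totalDegree a _).trans (hR i hi.1 hi.2).2))
        simpa using this
      omega
  · intro c t ht0 ht1 hlo hhi hpoly
    have ht0' : (0:ℝ) ≤ t 0 := ht0.le
    have habs1 : |t 1| ≤ t 1 + a * t 0 := by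
      rw [abs_le]; constructor <;> [nlinarith; nlinarith]
    -- step 1
    have step1 : |c| ≤ ∑ i ∈ Finset.range (d + 1), A i * |t i| := by
      rw [abs_le]
      constructor
      · calc -(∑ i ∈ Finset.range (d + 1), A i * |t i|)
            = ∑ i ∈ Finset.range (d + 1), -(A i * |t i|) := by rw [Finset.sum_neg_distrib]
          _ ≤ ∑ i ∈ Finset.range (d + 1), Cm i * t i := by
              refine Finset.sum_le_sum fun i _ => ?_
              have h1 : |Cm i * t i| ≤ A i * |t i| := by
                rw [abs_mul]
                exact mul_le_mul_of_nonneg_right (by simp [hA, abs_nonneg, le_add_of_nonneg_right]) (abs_nonneg _)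
              linarith [neg_abs_le (Cm i * t i)]
          _ ≤ c := hlo
      · calc c ≤ ∑ i ∈ Finset.range (d + 1), Cp i * t i := hhi
          _ ≤ ∑ i ∈ Finset.range (d + 1), A i * |t i| := by
              refine Finset.sum_le_sum fun i _ => ?_
              have h1 : |Cp i * t i| ≤ A i * |t i| := by
                rw [abs_mul]
                exact mul_le_mul_of_nonneg_right (by simp [hA, abs_nonneg, le_add_of_nonneg_left]) (abs_nonneg _)
              linarith [le_abs_self (Cp i * t i)]
    -- split sum
    have hsplit : Finset.range (d + 1) = insert 0 (insert 1 (Finset.Icc 2 d)) := by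
      ext i; simp [Finset.mem_Icc]; omega
    rw [le_div_iff₀ (pow_pos ht0 (d-1))]
    calc |c| * t 0 ^ (d - 1)
        ≤ (∑ i ∈ Finset.range (d + 1), A i * |t i|) * t 0 ^ (d - 1) :=
          mul_le_mul_of_nonneg_right step1 (pow_nonneg ht0' _)
      _ = ∑ i ∈ Finset.range (d + 1), A i * |t i| * t 0 ^ (d - 1) := Finset.sum_mul _ _ _
      _ = A 0 * |t 0| * t 0 ^ (d - 1) + (A 1 * |t 1| * t 0 ^ (d - 1)
            + ∑ i ∈ Finset.Icc 2 d, A i * |t i| * t 0 ^ (d - 1)) := by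
          rw [hsplit, Finset.sum_insert (by simp), Finset.sum_insert (by simp [Finset.mem_Icc])]
      _ ≤ A 0 * t 0 ^ d + (A 1 * (t 1 + a * t 0) * t 0 ^ (d - 1)
            + ∑ i ∈ Finset.Icc 2 d,
                A i * (MvPolynomial.eval ![t 0, t 1] (maj a (Rm i))
                  + MvPolynomial.eval ![t 0, t 1] (maj a (Rp i))) * t 0 ^ (d - i)) := by
          have hA0 : (0:ℝ) ≤ A 0 := by positivity
          gcongr ?_ + (?_ + ?_)
          · have : |t 0| * t 0 ^ (d-1) = t 0 ^ d := by
              rw [abs_of_nonneg ht0', ← pow_succ']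
              congr 1; omega
            rw [mul_assoc, this]
          · have hA1 : (0:ℝ) ≤ A 1 := by positivity
            exact mul_le_mul_of_nonneg_right
              (mul_le_mul_of_nonneg_left habs1 hA1) (pow_nonneg ht0' _)
          · refine Finset.sum_le_sum fun i hi => ?_
            simp only [Finset.mem_Icc] at hi
            have hAi : (0:ℝ) ≤ A i := by positivity
            have hb := hpoly i hi.1 hi.2
            have hti : |t i * t 0 ^ (i-1)| ≤ MvPolynomial.eval ![t 0, t 1] (maj a (Rm i))
                + MvPolynomial.eval ![t 0, t 1] (maj a (Rp i)) := by
              have h1 := maj_eval a (Rm i) (t 0) (t 1) ht0' habs1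
              have h2 := maj_eval a (Rp i) (t 0) (t 1) ht0' habs1
              rw [abs_le]
              constructor
              · have := neg_abs_le (MvPolynomial.eval ![t 0, t 1] (Rm i))
                have h3 := (abs_nonneg (MvPolynomial.eval ![t 0, t 1] (Rp i))).trans h2
                linarith [hb.1]
              · have := le_abs_self (MvPolynomial.eval ![t 0, t 1] (Rp i))
                have h3 := (abs_nonneg (MvPolynomial.eval ![t 0, t 1] (Rm i))).trans h1
                linarith [hb.2]
            have hsplitpow : t 0 ^ (d - 1) = t 0 ^ (i - 1) * t 0 ^ (d - i) := by
              rw [← pow_add]; congr 1; omega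
            calc A i * |t i| * t 0 ^ (d - 1)
                = A i * (|t i| * t 0 ^ (i-1)) * t 0 ^ (d - i) := by rw [hsplitpow]; ring
              _ = A i * |t i * t 0 ^ (i-1)| * t 0 ^ (d - i) := by
                  rw [abs_mul, abs_of_nonneg (pow_nonneg ht0' _)]
              _ ≤ A i * (MvPolynomial.eval ![t 0, t 1] (maj a (Rm i))
                    + MvPolynomial.eval ![t 0, t 1] (maj a (Rp i))) * t 0 ^ (d - i) :=
                  mul_le_mul_of_nonneg_right (mul_le_mul_of_nonneg_left hti hAi)
                    (pow_nonneg ht0' _)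
      _ = MvPolynomial.eval ![t 0, t 1]
            (MvPolynomial.C (A 0) * (MvPolynomial.X 0) ^ d
              + MvPolynomial.C (A 1) * v * (MvPolynomial.X 0) ^ (d - 1)
              + ∑ i ∈ Finset.Icc 2 d, MvPolynomial.C (A i) * (maj a (Rm i) + maj a (Rp i))
                  * (MvPolynomial.X 0) ^ (d - i)) := by
          simp [hv, map_sum, add_assoc]
end
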